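/- arXiv:1706.00773 — 8 statements merged into one kernel-verified Lean document; each statement's English description precedes it below -/
import Mathlib

section
/- Let $\lambda_1, \dots, \lambda_n$ be distinct real numbers, let $\Lambda = \mathrm{diag}(\lambda_1, \dots, \lambda_n)$, and let $U$ be a real $n \times r$ matrix. For each $j$, let $u_j = U^T e_j \in \mathbb{R}^r$ (the $j$-th row of $U$ as a column vector) and let $D_j$ be the $n \times n$ diagonal matrix with $(D_j)_{kk} = 1/(\lambda_k - \lambda_j)$ for $k \neq j$ and $(D_j)_{jj} = 0$. Then for every real $\lambda \notin \{\lambda_1, \dots, \lambda_n\}$, the multiple-rank secular function admits the partial-fraction (secular) form $\det(I_r - U^T(\lambda I_n - \Lambda)^{-1} U) = 1 + \sum_{j=1}^{n} \frac{\alpha_j}{\lambda_j - \lambda}$, where $\alpha_j = u_j^{T} \, \mathrm{adj}(I_r + U^{T} D_j U) \, u_j$ and $\mathrm{adj}$ denotes the adjugate matrix. -/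
/-!
Multiplying the secular function by `∏ₖ (x - λₖ)` turns it into the characteristic polynomial `χ`
of `Λ + U Uᵀ` (Sylvester's identity `det (1 + A B) = det (1 + B A)`). Since `χ` is monic of degree
`n`, Lagrange interpolation at the distinct nodes `λⱼ` gives its partial-fraction expansion, with
coefficients `χ(λⱼ) / ∏_{k ≠ j} (λⱼ - λₖ)`. Finally `χ(λⱼ) = det (diag (λⱼ - λ) - U Uᵀ)` has a
single vanishing diagonal entry; replacing it by `1` changes the determinant by the `(j, j)`
cofactor, and comparing the two rank-`r` determinants through the matrix determinant lemma in
its adjugate form yields `χ(λⱼ) = -αⱼ ∏_{k ≠ j} (λⱼ - λₖ)`.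
-/

open Matrix Finset Polynomial

namespace Lagrange

theorem eval_eq_eval_nodal_mul_one_add_sum {F ι : Type*} [Field F] [DecidableEq ι] {s : Finset ι}
    {v : ι → F} (hvs : Set.InjOn v s) {p : F[X]} (hp : p.Monic) (hdeg : p.natDegree = #s) {x : F}
    (hx : ∀ i ∈ s, x ≠ v i) :
    p.eval x =
      (nodal s v).eval x * (1 + ∑ i ∈ s, nodalWeight s v i * (x - v i)⁻¹ * p.eval (v i)) := by
  have hlt : (p - nodal s v).degree < #s := by
    have hdeg' : p.degree = #s := by rw [degree_eq_natDegree hp.ne_zero, hdeg]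
    rw [← hdeg']
    exact degree_sub_lt_left (by rw [hdeg', degree_nodal]) hp.ne_zero
      (by rw [hp.leadingCoeff, nodal_monic.leadingCoeff])
  have key := congrArg (eval x) (eq_interpolate hvs hlt)
  rw [eval_interpolate_not_at_node _ hx, eval_sub] at key
  have hnodes : ∀ i ∈ s, (p - nodal s v).eval (v i) = p.eval (v i) := fun i hi => by
    rw [eval_sub, eval_nodal_at_node hi, sub_zero]
  rw [sum_congr rfl fun i hi => by rw [hnodes i hi]] at key
  linear_combination key

end Lagrange

namespace RingHom

variable {n R S : Type*} [Fintype n] [DecidableEq n] [CommRing R] [CommRing S]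

theorem map_det_add_vecMulVec (f : R →+* S) (A : Matrix n n R) (u v : n → R) :
    f (A + vecMulVec u v).det = (f.mapMatrix A + vecMulVec (f ∘ u) (f ∘ v)).det := by
  rw [f.map_det]
  congr 1
  ext i k
  simp [vecMulVec_apply]

theorem map_det_add_dotProduct_adjugate_mulVec (f : R →+* S) (A : Matrix n n R) (u v : n → R) :
    f (A.det + v ⬝ᵥ A.adjugate *ᵥ u) =
      (f.mapMatrix A).det + (f ∘ v) ⬝ᵥ (f.mapMatrix A).adjugate *ᵥ (f ∘ u) := by
  rw [map_add, f.map_det, f.map_dotProduct, ← f.map_adjugate]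
  congr 2
  ext i
  exact f.map_mulVec _ _ i

end RingHom

namespace Matrix

variable {m n R F : Type*} [DecidableEq m] [DecidableEq n] [CommRing R] [Field F]

theorem diagonal_update_one_of_eq_zero {w : n → R} {j : n} (hj : w j = 0) :
    diagonal (Function.update w j 1) = diagonal w + vecMulVec (Pi.single j 1) (Pi.single j 1) := by
  rw [← single_eq_single_vecMulVec_single, ← diagonal_single, diagonal_add]
  congr 1
  ext k
  rcases eq_or_ne k j with rfl | hk
  · simp [hj]
  · simp [hk]

variable [Fintype n]

theorem det_add_vecMulVec_of_isUnit {A : Matrix n n R} (hA : IsUnit A.det) (u v : n → R) :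
    (A + vecMulVec u v).det = A.det + v ⬝ᵥ A.adjugate *ᵥ u := by
  have hfactor : A + vecMulVec u v = A * (1 + vecMulVec (A⁻¹ *ᵥ u) v) := by
    rw [Matrix.mul_add, Matrix.mul_one, mul_vecMulVec, mulVec_mulVec, mul_nonsing_inv A hA,
      one_mulVec]
  rw [hfactor, det_mul, vecMulVec_eq Unit, det_one_add_replicateCol_mul_replicateRow, mul_add,
    mul_one, inv_def, smul_mulVec, dotProduct_smul, smul_eq_mul,
    ← mul_assoc, Ring.mul_inverse_cancel _ hA, one_mul]

/-- `charmatrix (-A)` has a monic, hence regular, determinant, so it becomes invertible in a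
localization, and it specializes to `A` at `X = 0`. -/
theorem det_add_vecMulVec (A : Matrix n n R) (u v : n → R) :
    (A + vecMulVec u v).det = A.det + v ⬝ᵥ A.adjugate *ᵥ u := by
  let B := charmatrix (-A)
  have hB : (B + vecMulVec (C ∘ u) (C ∘ v)).det = B.det + (C ∘ v) ⬝ᵥ B.adjugate *ᵥ (C ∘ u) := by
    let L := Localization.Away (-A).charpoly
    have hinj : Function.Injective (algebraMap R[X] L) :=
      IsLocalization.injective L
        (Submonoid.powers_le.mpr (charpoly_monic (-A)).mem_nonZeroDivisors)
    apply hinj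
    rw [RingHom.map_det_add_vecMulVec, RingHom.map_det_add_dotProduct_adjugate_mulVec]
    refine det_add_vecMulVec_of_isUnit ?_ _ _
    rw [← RingHom.map_det]
    exact IsLocalization.Away.algebraMap_isUnit (-A).charpoly
  have hA : (evalRingHom 0).mapMatrix B = A := by
    ext i k
    by_cases h : i = k <;> simp [B, h]
  have hC : ∀ w : n → R, evalRingHom 0 ∘ C ∘ w = w := fun w => funext fun _ => eval_C
  have hB0 := congrArg (evalRingHom 0) hB
  rwa [RingHom.map_det_add_vecMulVec, RingHom.map_det_add_dotProduct_adjugate_mulVec, hA, hC,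
    hC] at hB0

theorem det_diagonal_update_one (w : n → R) (j : n) :
    (diagonal (Function.update w j 1)).det = ∏ k ∈ univ.erase j, w k := by
  rw [det_diagonal, prod_update_of_mem (mem_univ j), one_mul, sdiff_singleton_eq_erase]

theorem one_add_mul_diagonal_update_inv_mul {w : n → F} {j : n} (hj : w j = 0)
    (U : Matrix n m F) (V : Matrix m n F) :
    1 + V * diagonal (Function.update w j 1)⁻¹ * U =
      1 + V * diagonal w⁻¹ * U + vecMulVec (fun i => V i j) (U j) := by
  have hinv : (Function.update w j 1)⁻¹ = Function.update w⁻¹ j 1 := by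
    rw [← Function.update_inv, inv_one]
  rw [hinv, diagonal_update_one_of_eq_zero (by simp [hj]),
    Matrix.mul_add, Matrix.add_mul, add_assoc, mul_vecMulVec, vecMulVec_mul, mulVec_single_one,
    single_one_vecMul]
  rfl

variable [Fintype m]

theorem det_diagonal_mul_det_one_add (c g : n → R) (U : Matrix n m R) (V : Matrix m n R) :
    (diagonal c).det * (1 + V * diagonal g * U).det =
      (diagonal c + diagonal (c * g) * (U * V)).det := by
  rw [Matrix.mul_assoc, det_one_add_mul_comm, ← det_mul, Matrix.mul_add, Matrix.mul_one,
    ← Matrix.mul_assoc, ← Matrix.mul_assoc, diagonal_mul_diagonal, Matrix.mul_assoc]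
  rfl

section SimpleZero

variable {w : n → F} {j : n}

theorem prod_erase_mul_det_one_add_mul_diagonal_inv_mul (hj : w j = 0) (hw : ∀ k ≠ j, w k ≠ 0)
    (U : Matrix n m F) (V : Matrix m n F) :
    (∏ k ∈ univ.erase j, w k) * (1 + V * diagonal w⁻¹ * U).det =
      (diagonal w + U * V).adjugate j j := by
  rw [← det_diagonal_update_one, det_diagonal_mul_det_one_add, adjugate_apply]
  -- the left side is `diagonal w + U * V` with row `j` replaced by `Pi.single j 1`
  congr 1
  ext a b
  rcases eq_or_ne a j with rfl | ha
  · rcases eq_or_ne b a with rfl | hb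
    · simp [hj]
    · simp [hj, hb, hb.symm]
  · simp [ha, hw a ha, diagonal_apply]

theorem prod_erase_mul_det_one_add_mul_diagonal_update_inv_mul (hj : w j = 0)
    (hw : ∀ k ≠ j, w k ≠ 0) (U : Matrix n m F) (V : Matrix m n F) :
    (∏ k ∈ univ.erase j, w k) * (1 + V * diagonal (Function.update w j 1)⁻¹ * U).det =
      (diagonal w + U * V).det + (diagonal w + U * V).adjugate j j := by
  have hinv : diagonal (Function.update w j 1 * (Function.update w j 1)⁻¹) = 1 := by
    rw [← diagonal_one]
    refine congrArg diagonal (funext fun k => mul_inv_cancel₀ ?_)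
    rcases eq_or_ne k j with rfl | hk
    · simp
    · simpa [hk] using hw k hk
  rw [← det_diagonal_update_one, det_diagonal_mul_det_one_add, hinv, Matrix.one_mul,
    diagonal_update_one_of_eq_zero hj, add_right_comm, det_add_vecMulVec]
  simp

theorem det_diagonal_add_mul_of_eq_zero (hj : w j = 0) (hw : ∀ k ≠ j, w k ≠ 0)
    (U : Matrix n m F) (V : Matrix m n F) :
    (diagonal w + U * V).det =
      (U j ⬝ᵥ (1 + V * diagonal w⁻¹ * U).adjugate *ᵥ fun i => V i j) *
        ∏ k ∈ univ.erase j, w k := by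
  have hplus := prod_erase_mul_det_one_add_mul_diagonal_update_inv_mul hj hw U V
  rw [one_add_mul_diagonal_update_inv_mul hj, det_add_vecMulVec,
    ← prod_erase_mul_det_one_add_mul_diagonal_inv_mul hj hw U V] at hplus
  linear_combination -hplus

end SimpleZero

theorem eval_charpoly_diagonal_add_mul {lam : n → F} {x : F} (hx : ∀ k, x ≠ lam k)
    (U : Matrix n m F) (V : Matrix m n F) :
    (diagonal lam + U * V).charpoly.eval x =
      (∏ k, (x - lam k)) * (1 - V * (x • 1 - diagonal lam)⁻¹ * U).det := by
  set c : n → F := fun k => x - lam k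
  have hdiag : x • (1 : Matrix n n F) - diagonal lam = diagonal c := by
    rw [smul_one_eq_diagonal, diagonal_sub]
  have hcc : diagonal (c * c⁻¹) = 1 := by
    rw [← diagonal_one]
    exact congrArg diagonal (funext fun k => mul_inv_cancel₀ (sub_ne_zero.mpr (hx k)))
  have hinv : (diagonal c)⁻¹ = diagonal c⁻¹ :=
    inv_eq_right_inv (by rw [diagonal_mul_diagonal]; exact hcc)
  rw [hdiag, hinv, sub_eq_add_neg, ← Matrix.neg_mul, ← Matrix.neg_mul, ← det_diagonal,
    det_diagonal_mul_det_one_add, hcc, Matrix.one_mul, eval_charpoly, scalar_apply,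
    Matrix.mul_neg, ← sub_eq_add_neg, ← diagonal_sub, sub_add_eq_sub_sub]

def secularCoeff (lam : n → F) (U : Matrix n m F) (j : n) : F :=
  U j ⬝ᵥ (1 + Uᵀ * diagonal (fun k => if k = j then 0 else (lam k - lam j)⁻¹) * U).adjugate *ᵥ U j

theorem nodalWeight_mul_eval_charpoly {lam : n → F} (hlam : Function.Injective lam)
    (U : Matrix n m F) (j : n) :
    Lagrange.nodalWeight univ lam j * (diagonal lam + U * Uᵀ).charpoly.eval (lam j) =
      -secularCoeff lam U j := by
  have hwj : ∀ k ≠ j, lam j - lam k ≠ 0 := fun k hk => sub_ne_zero.mpr (hlam.ne hk.symm)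
  have hdet : (diagonal lam + U * Uᵀ).charpoly.eval (lam j) =
      (diagonal (fun k => lam j - lam k) + U * -Uᵀ).det := by
    rw [eval_charpoly, scalar_apply, Matrix.mul_neg, ← sub_eq_add_neg, ← sub_sub, diagonal_sub]
  have hcoeff : (-Uᵀ) * diagonal (fun k => lam j - lam k)⁻¹ =
      Uᵀ * diagonal (fun k => if k = j then 0 else (lam k - lam j)⁻¹) := by
    rw [Matrix.neg_mul, ← Matrix.mul_neg, diagonal_neg]
    congr 2
    ext k
    split_ifs with hk
    · simp [hk]
    · rw [Pi.inv_apply, neg_inv, neg_sub]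
  rw [hdet, det_diagonal_add_mul_of_eq_zero (sub_self _) hwj, hcoeff, Lagrange.nodalWeight,
    prod_inv_distrib, mul_left_comm, inv_mul_cancel₀ (prod_ne_zero_iff.mpr fun k hk =>
      hwj k (ne_of_mem_erase hk)), mul_one, secularCoeff]
  exact (congrArg _ (mulVec_neg _ _)).trans (dotProduct_neg _ _)

end Matrix

/-- Partial-fraction (secular) form of the multiple-rank secular function
`f(λ) = det (I_r - Uᵀ (λ Iₙ - Λ)⁻¹ U)` for `Λ = diag(λ₁, …, λₙ)` with distinct
diagonal entries: `f(λ) = 1 + ∑ j, αⱼ / (λⱼ - λ)` where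
`αⱼ = uⱼᵀ adj(I_r + Uᵀ Dⱼ U) uⱼ`, `uⱼ` the `j`-th row of `U`, and
`Dⱼ = diag(1/(λ_k - λ_j))` with `(Dⱼ)ⱼⱼ = 0`. -/
theorem multiple_rank_secular_partial_fraction (n r : ℕ) (lam : Fin n → ℝ)
    (hlam : Function.Injective lam) (U : Matrix (Fin n) (Fin r) ℝ)
    (x : ℝ) (hx : ∀ j, x ≠ lam j) :
    ((1 : Matrix (Fin r) (Fin r) ℝ) -
        Uᵀ * (x • (1 : Matrix (Fin n) (Fin n) ℝ) - Matrix.diagonal lam)⁻¹ * U).det =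
      1 + ∑ j : Fin n,
        ((fun i => U j i) ⬝ᵥ
            (((1 : Matrix (Fin r) (Fin r) ℝ) +
                Uᵀ * Matrix.diagonal (fun k => if k = j then 0 else (lam k - lam j)⁻¹) * U).adjugate
              *ᵥ fun i => U j i)) / (lam j - x) := by
  show _ = 1 + ∑ j, secularCoeff lam U j / (lam j - x)
  have hnodal : ∏ k, (x - lam k) ≠ 0 := prod_ne_zero_iff.mpr fun k _ => sub_ne_zero.mpr (hx k)
  have hinterp := Lagrange.eval_eq_eval_nodal_mul_one_add_sum hlam.injOn
    (charpoly_monic (diagonal lam + U * Uᵀ)) (by rw [charpoly_natDegree_eq_dim, card_univ])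
    (x := x) fun k _ => hx k
  rw [eval_charpoly_diagonal_add_mul hx, Lagrange.eval_nodal] at hinterp
  refine (mul_left_cancel₀ hnodal hinterp).trans (congrArg _ (sum_congr rfl fun j _ => ?_))
  rw [mul_right_comm, nodalWeight_mul_eval_charpoly hlam, ← neg_sub, inv_neg, neg_mul_neg,
    div_eq_mul_inv]
end

section
/- Let $\lambda_1 < \lambda_2 < \cdots < \lambda_n$ be real numbers and $\mu_1, \dots, \mu_n$ real numbers, and define $f(\lambda) = 1 + \sum_{j=1}^{n} \frac{\mu_j}{\lambda_j - \lambda}$ for $\lambda \notin \{\lambda_1, \dots, \lambda_n\}$. If for some $1 \le i \le n-1$ one has $\mu_i \cdot \mu_{i+1} > 0$, then $f$ has at least one zero in the open interval $(\lambda_i, \lambda_{i+1})$. -/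
open Filter Set Topology Finset

private lemma aux_tendsto_inv_right (p : ℝ) :
    Tendsto (fun x => (x - p)⁻¹) (𝓝[>] p) atTop := by
  apply Filter.Tendsto.inv_tendsto_nhdsGT_zero
  apply tendsto_nhdsWithin_of_tendsto_nhds_of_eventually_within
  · have h : Tendsto (fun x => x - p) (𝓝 p) (𝓝 (p - p)) :=
      tendsto_id.sub tendsto_const_nhds
    rw [sub_self] at h
    exact h.mono_left nhdsWithin_le_nhds
  · filter_upwards [self_mem_nhdsWithin] with x hx
    simpa [sub_pos] using hx

private lemma aux_tendsto_inv_left (p : ℝ) :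
    Tendsto (fun x => (p - x)⁻¹) (𝓝[<] p) atTop := by
  apply Filter.Tendsto.inv_tendsto_nhdsGT_zero
  apply tendsto_nhdsWithin_of_tendsto_nhds_of_eventually_within
  · have h : Tendsto (fun x => p - x) (𝓝 p) (𝓝 (p - p)) :=
      tendsto_const_nhds.sub tendsto_id
    rw [sub_self] at h
    exact h.mono_left nhdsWithin_le_nhds
  · filter_upwards [self_mem_nhdsWithin] with x hx
    simpa [sub_pos] using hx

/-- If the residue coefficients at two consecutive poles have the same sign,
the secular function `f(λ) = 1 + ∑ j, μⱼ/(λⱼ - λ)` has a zero strictly between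
the two poles. -/
theorem secular_zero_of_same_sign (n : ℕ) (lam μ : Fin n → ℝ) (hlam : StrictMono lam)
    (i j : Fin n) (hij : (j : ℕ) = (i : ℕ) + 1) (hμ : μ i * μ j > 0) :
    ∃ x, lam i < x ∧ x < lam j ∧ 1 + ∑ k, μ k / (lam k - x) = 0 := by
  set f : ℝ → ℝ := fun x => 1 + ∑ k, μ k / (lam k - x) with hf
  have hij' : lam i < lam j := hlam (by rw [Fin.lt_def, hij]; omega)
  -- no pole inside the interval
  have hk : ∀ k : Fin n, ∀ x ∈ Ioo (lam i) (lam j), lam k - x ≠ 0 := by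
    intro k x hx
    rcases le_or_gt (k : ℕ) (i : ℕ) with h | h
    · have : lam k ≤ lam i := hlam.monotone (by rwa [Fin.le_def])
      exact sub_ne_zero_of_ne (by rcases hx with ⟨h1, _⟩; linarith)
    · have : lam j ≤ lam k := hlam.monotone (by rw [Fin.le_def]; omega)
      exact sub_ne_zero_of_ne (by rcases hx with ⟨_, h2⟩; linarith)
  have hcont : ContinuousOn f (Ioo (lam i) (lam j)) := by
    apply continuousOn_const.add
    apply continuousOn_finset_sum
    intro k _
    exact continuousOn_const.div (continuousOn_const.sub continuousOn_id) (hk k)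
  -- splitting off the singular term at a pole m
  have hsplit : ∀ (m : Fin n) (x : ℝ),
      f x = μ m / (lam m - x) + (1 + ∑ k ∈ univ.erase m, μ k / (lam k - x)) := by
    intro m x
    have h2 : ∑ k, μ k / (lam k - x)
        = μ m / (lam m - x) + ∑ k ∈ univ.erase m, μ k / (lam k - x) :=
      (Finset.add_sum_erase _ _ (mem_univ m)).symm
    simp only [hf, h2]
    ring
  -- the regular part is continuous at the pole
  have hreg : ∀ m : Fin n,
      Tendsto (fun x => 1 + ∑ k ∈ univ.erase m, μ k / (lam k - x)) (𝓝 (lam m))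
        (𝓝 (1 + ∑ k ∈ univ.erase m, μ k / (lam k - lam m))) := by
    intro m
    apply tendsto_const_nhds.add
    apply tendsto_finset_sum
    intro k hkm
    have hne : lam k - lam m ≠ 0 := by
      apply sub_ne_zero_of_ne
      exact fun h => (Finset.mem_erase.1 hkm).1 (hlam.injective h)
    exact (continuousAt_const.div (continuousAt_const.sub continuousAt_id) hne).tendsto
  -- singular behaviour: μ m / (lam m - x) as x → lam m
  have hsing_right : ∀ m : Fin n, 0 < μ m →
      Tendsto (fun x => μ m / (lam m - x)) (𝓝[>] lam m) atBot := by
    intro m hm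
    have h1 : Tendsto (fun x => -μ m * (x - lam m)⁻¹) (𝓝[>] lam m) atBot :=
      (aux_tendsto_inv_right (lam m)).const_mul_atTop_of_neg (by linarith)
    refine h1.congr fun x => ?_
    rw [show lam m - x = -(x - lam m) by ring, div_eq_mul_inv, inv_neg]
    ring
  have hsing_right' : ∀ m : Fin n, μ m < 0 →
      Tendsto (fun x => μ m / (lam m - x)) (𝓝[>] lam m) atTop := by
    intro m hm
    have h1 : Tendsto (fun x => -μ m * (x - lam m)⁻¹) (𝓝[>] lam m) atTop :=
      (aux_tendsto_inv_right (lam m)).const_mul_atTop (by linarith)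
    refine h1.congr fun x => ?_
    rw [show lam m - x = -(x - lam m) by ring, div_eq_mul_inv, inv_neg]
    ring
  have hsing_left : ∀ m : Fin n, 0 < μ m →
      Tendsto (fun x => μ m / (lam m - x)) (𝓝[<] lam m) atTop := by
    intro m hm
    have h1 : Tendsto (fun x => μ m * (lam m - x)⁻¹) (𝓝[<] lam m) atTop :=
      (aux_tendsto_inv_left (lam m)).const_mul_atTop hm
    refine h1.congr fun x => by rw [div_eq_mul_inv]
  have hsing_left' : ∀ m : Fin n, μ m < 0 →
      Tendsto (fun x => μ m / (lam m - x)) (𝓝[<] lam m) atBot := by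
    intro m hm
    have h1 : Tendsto (fun x => μ m * (lam m - x)⁻¹) (𝓝[<] lam m) atBot :=
      (aux_tendsto_inv_left (lam m)).const_mul_atTop_of_neg hm
    refine h1.congr fun x => by rw [div_eq_mul_inv]
  -- f tends to ∓∞ near the poles
  have hreg' : ∀ m : Fin n, ∀ l : Filter ℝ, l ≤ 𝓝 (lam m) →
      Tendsto (fun x => 1 + ∑ k ∈ univ.erase m, μ k / (lam k - x)) l
        (𝓝 (1 + ∑ k ∈ univ.erase m, μ k / (lam k - lam m))) := by
    intro m l hl
    exact (hreg m).mono_left hl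
  have key : ∀ a b : ℝ, a ∈ Ioo (lam i) (lam j) → b ∈ Ioo (lam i) (lam j) →
      f a < 0 → 0 < f b → ∃ x, lam i < x ∧ x < lam j ∧ f x = 0 := by
    intro a b ha hb hfa hfb
    have hsub : uIcc a b ⊆ Ioo (lam i) (lam j) := ordConnected_Ioo.uIcc_subset ha hb
    have h0 : (0:ℝ) ∈ uIcc (f a) (f b) :=
      Set.mem_uIcc.2 (Or.inl ⟨le_of_lt hfa, le_of_lt hfb⟩)
    obtain ⟨x, hx, hfx⟩ := intermediate_value_uIcc (hcont.mono hsub) h0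
    exact ⟨x, (hsub hx).1, (hsub hx).2, hfx⟩
  rcases mul_pos_iff.1 hμ with ⟨hi, hj⟩ | ⟨hi, hj⟩
  · -- both positive : f → -∞ at lam i⁺, f → +∞ at lam j⁻
    have hAi : Tendsto f (𝓝[>] lam i) atBot := by
      have := (hreg' i _ nhdsWithin_le_nhds).add_atBot (hsing_right i hi)
      exact this.congr fun x => by rw [hsplit i x, add_comm]
    have hAj : Tendsto f (𝓝[<] lam j) atTop := by
      have := (hreg' j _ nhdsWithin_le_nhds).add_atTop (hsing_left j hj)
      exact this.congr fun x => by rw [hsplit j x, add_comm]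
    have hEa : ∀ᶠ x in 𝓝[>] lam i, f x < 0 ∧ x ∈ Ioo (lam i) (lam j) := by
      filter_upwards [hAi.eventually_lt_atBot 0,
        Ioo_mem_nhdsGT hij'] with x h1 h2 using ⟨h1, h2⟩
    have hEb : ∀ᶠ x in 𝓝[<] lam j, 0 < f x ∧ x ∈ Ioo (lam i) (lam j) := by
      filter_upwards [hAj.eventually_gt_atTop 0,
        Ioo_mem_nhdsLT hij'] with x h1 h2 using ⟨h1, h2⟩
    obtain ⟨a, hfa, ha⟩ := hEa.exists
    obtain ⟨b, hfb, hb⟩ := hEb.exists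
    exact key a b ha hb hfa hfb
  · -- both negative : f → +∞ at lam i⁺, f → -∞ at lam j⁻
    have hAi : Tendsto f (𝓝[>] lam i) atTop := by
      have := (hreg' i _ nhdsWithin_le_nhds).add_atTop (hsing_right' i hi)
      exact this.congr fun x => by rw [hsplit i x, add_comm]
    have hAj : Tendsto f (𝓝[<] lam j) atBot := by
      have := (hreg' j _ nhdsWithin_le_nhds).add_atBot (hsing_left' j hj)
      exact this.congr fun x => by rw [hsplit j x, add_comm]
    have hEb : ∀ᶠ x in 𝓝[>] lam i, 0 < f x ∧ x ∈ Ioo (lam i) (lam j) := by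
      filter_upwards [hAi.eventually_gt_atTop 0,
        Ioo_mem_nhdsGT hij'] with x h1 h2 using ⟨h1, h2⟩
    have hEa : ∀ᶠ x in 𝓝[<] lam j, f x < 0 ∧ x ∈ Ioo (lam i) (lam j) := by
      filter_upwards [hAj.eventually_lt_atBot 0,
        Ioo_mem_nhdsLT hij'] with x h1 h2 using ⟨h1, h2⟩
    obtain ⟨b, hfb, hb⟩ := hEb.exists
    obtain ⟨a, hfa, ha⟩ := hEa.exists
    exact key a b ha hb hfa hfb
end

section
/- Let $\lambda_1 < \lambda_2 < \cdots < \lambda_n$ be real numbers and $\mu_1, \dots, \mu_n$ real numbers, and define the polynomial $p(\lambda) = \prod_{k=1}^{n}(\lambda - \lambda_k) - \sum_{j=1}^{n} \mu_j \prod_{k \ne j}(\lambda - \lambda_k)$. Then for each $1 \le i \le n-1$: $p(\lambda_i) \cdot p(\lambda_{i+1}) = \mu_i \, \mu_{i+1} \prod_{k \ne i}(\lambda_i - \lambda_k) \prod_{k \ne i+1}(\lambda_{i+1} - \lambda_k)$, and the quantity $\prod_{k \ne i}(\lambda_i - \lambda_k) \prod_{k \ne i+1}(\lambda_{i+1} -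 \lambda_k)$ is strictly negative. Consequently, if $\mu_i \mu_{i+1} > 0$ then $p(\lambda_i) p(\lambda_{i+1}) < 0$, and if $\mu_i \mu_{i+1} < 0$ then $p(\lambda_i) p(\lambda_{i+1}) > 0$. -/
/-!
At a pole `λᵢ` every term of `p` except `-μᵢ ∏_{k≠i}(λᵢ - λₖ)` contains the factor
`λᵢ - λᵢ`. For adjacent poles `λᵢ < λⱼ`, every other `λₖ` lies on the same side of both,
so `(λᵢ - λₖ)(λⱼ - λₖ) > 0`, and the double product has the sign of
`(λᵢ - λⱼ)(λⱼ - λᵢ) < 0`.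
-/

open Finset

section Secular

variable {ι R : Type*}

def secularPoly [Fintype ι] [DecidableEq ι] [CommRing R] (lam μ : ι → R) (x : R) : R :=
  ∏ k, (x - lam k) - ∑ j, μ j * ∏ k ∈ univ.erase j, (x - lam k)

theorem secularPoly_apply_pole [Fintype ι] [DecidableEq ι] [CommRing R] (lam μ : ι → R)
    (i : ι) :
    secularPoly lam μ (lam i) = -(μ i * ∏ k ∈ univ.erase i, (lam i - lam k)) := by
  have hvanish : ∀ s : Finset ι, i ∈ s → ∏ k ∈ s, (lam i - lam k) = 0 := fun s hi =>
    prod_eq_zero hi (sub_self _)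
  rw [secularPoly, hvanish _ (mem_univ i), sum_eq_single i]
  · ring
  · intro j _ hji
    rw [hvanish _ (mem_erase.mpr ⟨Ne.symm hji, mem_univ i⟩), mul_zero]
  · exact fun h => absurd (mem_univ i) h

variable [LinearOrder ι] [CommRing R] [LinearOrder R] [IsStrictOrderedRing R]
  {lam : ι → R} {i j k : ι}

theorem StrictMono.sub_mul_sub_pos_of_covBy (hlam : StrictMono lam) (hij : i ⋖ j)
    (hki : k ≠ i) (hkj : k ≠ j) : 0 < (lam i - lam k) * (lam j - lam k) := by
  rcases hki.lt_or_gt with hki | hik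
  · have hkj : k < j := hki.trans hij.lt
    exact mul_pos (sub_pos.mpr (hlam hki)) (sub_pos.mpr (hlam hkj))
  · have hjk : j < k := (hij.ge_of_gt hik).lt_of_ne (Ne.symm hkj)
    exact mul_pos_of_neg_of_neg (sub_neg.mpr (hlam hik)) (sub_neg.mpr (hlam hjk))

theorem StrictMono.prod_erase_sub_mul_prod_erase_sub_neg_of_covBy [Fintype ι] [DecidableEq ι]
    (hlam : StrictMono lam) (hij : i ⋖ j) :
    (∏ k ∈ univ.erase i, (lam i - lam k)) * ∏ k ∈ univ.erase j, (lam j - lam k) < 0 := by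
  have hne : i ≠ j := hij.lt.ne
  set others := (univ.erase i).erase j
  have hsplit_i : ∏ k ∈ univ.erase i, (lam i - lam k)
      = (lam i - lam j) * ∏ k ∈ others, (lam i - lam k) :=
    (mul_prod_erase _ _ (mem_erase.mpr ⟨hne.symm, mem_univ j⟩)).symm
  have hsplit_j : ∏ k ∈ univ.erase j, (lam j - lam k)
      = (lam j - lam i) * ∏ k ∈ others, (lam j - lam k) := by
    rw [← mul_prod_erase _ _ (mem_erase.mpr ⟨hne, mem_univ i⟩), erase_right_comm]
  have hothers : 0 < ∏ k ∈ others, (lam i - lam k) * (lam j - lam k) :=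
    prod_pos fun k hk =>
      hlam.sub_mul_sub_pos_of_covBy hij (mem_erase.mp (mem_erase.mp hk).2).1 (mem_erase.mp hk).1
  have hpair : (lam i - lam j) * (lam j - lam i) < 0 :=
    mul_neg_of_neg_of_pos (sub_neg.mpr (hlam hij.lt)) (sub_pos.mpr (hlam hij.lt))
  calc (∏ k ∈ univ.erase i, (lam i - lam k)) * ∏ k ∈ univ.erase j, (lam j - lam k)
      = (lam i - lam j) * (lam j - lam i) *
          ∏ k ∈ others, (lam i - lam k) * (lam j - lam k) := by
        rw [hsplit_i, hsplit_j, prod_mul_distrib]; ring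
    _ < 0 := mul_neg_of_neg_of_pos hpair hothers

end Secular

/-- For the polynomial form `p(λ) = ∏ₖ (λ - λₖ) - ∑ⱼ μⱼ ∏_{k ≠ j} (λ - λₖ)` of a
secular function, the product `p(λᵢ) p(λᵢ₊₁)` equals
`μᵢ μᵢ₊₁ ∏_{k≠i}(λᵢ - λₖ) ∏_{k≠i+1}(λᵢ₊₁ - λₖ)`, the latter double product is
strictly negative, and consequently the sign of `p(λᵢ) p(λᵢ₊₁)` is opposite to
that of `μᵢ μᵢ₊₁`. -/
theorem secular_polynomial_sign_at_consecutive_poles (n : ℕ) (lam μ : Fin n → ℝ)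
    (hlam : StrictMono lam) (p : ℝ → ℝ)
    (hp : ∀ x, p x = ∏ k, (x - lam k) - ∑ j, μ j * ∏ k ∈ univ.erase j, (x - lam k))
    (i j : Fin n) (hij : (j : ℕ) = (i : ℕ) + 1) :
    p (lam i) * p (lam j) =
        μ i * μ j *
          ((∏ k ∈ univ.erase i, (lam i - lam k)) * ∏ k ∈ univ.erase j, (lam j - lam k)) ∧
      ((∏ k ∈ univ.erase i, (lam i - lam k)) * ∏ k ∈ univ.erase j, (lam j - lam k)) < 0 ∧
      (μ i * μ j > 0 → p (lam i) * p (lam j) < 0) ∧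
      (μ i * μ j < 0 → p (lam i) * p (lam j) > 0) := by
  have hcov : i ⋖ j := ⟨Fin.lt_def.mpr (by omega), fun k hik hkj => by
    rw [Fin.lt_def] at hik hkj; omega⟩
  have heq : p (lam i) * p (lam j) = μ i * μ j *
      ((∏ k ∈ univ.erase i, (lam i - lam k)) * ∏ k ∈ univ.erase j, (lam j - lam k)) := by
    rw [hp, hp, ← secularPoly, ← secularPoly, secularPoly_apply_pole, secularPoly_apply_pole]
    ring
  have hneg := hlam.prod_erase_sub_mul_prod_erase_sub_neg_of_covBy hcov
  refine ⟨heq, hneg, fun hμ => ?_, fun hμ => ?_⟩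
  · rw [heq]; exact mul_neg_of_pos_of_neg hμ hneg
  · rw [heq]; exact mul_pos_of_neg_of_neg hμ hneg
end

section
/- Let $\lambda_1, \dots, \lambda_N$ be distinct real numbers and $\alpha_1, \dots, \alpha_N$ real numbers. Define the polynomial $p_0(\lambda) = \prod_{k=1}^{N}(\lambda - \lambda_k) - \sum_{j=1}^{N} \alpha_j \prod_{k \ne j}(\lambda - \lambda_k)$. Then its derivative satisfies $p_0'(\lambda) = \sum_{j=1}^{N} \mu_j \prod_{k \ne j}(\lambda - \lambda_k)$, where $\mu_j = 1 - \sum_{i \ne j} \frac{\alpha_i + \alpha_j}{\lambda_j - \lambda_i}$. Equivalently, for $\lambda \notin \{\lambda_1, \dots, \lambda_N\}$, $p_0'(\lambda) = \Big[\sum_{j=1}^{N} \frac{\mu_j}{\lambda - \lambda_j}\Big] \prod_{k=1}^{N}(\lambda - \lambda_k)$. -/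
/-!
Write `P_J(t) = ∏_{k ∉ J} (t - λₖ)`. By the product rule `P_∅' = ∑ⱼ P_{j}` and
`P_{j}' = ∑_{i ≠ j} P_{i,j}`, and for `i ≠ j` the partial fraction identity
`(λⱼ - λᵢ) P_{i,j} = P_{j} - P_{i}` rewrites the second derivative terms in the basis `P_{j}`.
Collecting the coefficient of each `P_{j}` after exchanging the roles of `i` and `j` gives `μⱼ`.
-/

open Finset

section

variable {ι : Type*} [DecidableEq ι]

theorem hasDerivAt_prod_sub {𝕜 : Type*} [NontriviallyNormedField 𝕜] (s : Finset ι) (lam : ι → 𝕜)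
    (x : 𝕜) :
    HasDerivAt (fun t => ∏ k ∈ s, (t - lam k)) (∑ i ∈ s, ∏ k ∈ s.erase i, (x - lam k)) x := by
  simpa using HasDerivAt.fun_finsetProd (u := s) (x := x) (f' := fun _ => (1 : 𝕜))
    fun i _ => (hasDerivAt_id x).sub_const (lam i)

variable [Fintype ι]

theorem sum_sum_erase_comm {M : Type*} [AddCommMonoid M] (f : ι → ι → M) :
    ∑ j, ∑ i ∈ univ.erase j, f j i = ∑ j, ∑ i ∈ univ.erase j, f i j :=
  sum_comm' fun a b => by simp [ne_comm]

theorem sub_mul_prod_erase_erase {R : Type*} [CommRing R] (lam : ι → R) (x : R) {i j : ι}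
    (hij : i ≠ j) :
    (lam j - lam i) * ∏ k ∈ (univ.erase j).erase i, (x - lam k) =
      ∏ k ∈ univ.erase j, (x - lam k) - ∏ k ∈ univ.erase i, (x - lam k) := by
  rw [← mul_prod_erase (univ.erase j) (fun k => x - lam k) (mem_erase.2 ⟨hij, mem_univ i⟩),
    erase_right_comm,
    ← mul_prod_erase (univ.erase i) (fun k => x - lam k) (mem_erase.2 ⟨hij.symm, mem_univ j⟩),
    erase_right_comm]
  ring

theorem sum_mul_sum_prod_erase_erase {K : Type*} [Field K] {lam : ι → K}
    (hlam : Function.Injective lam) (α : ι → K) (x : K) :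
    ∑ j, α j * ∑ i ∈ univ.erase j, ∏ k ∈ (univ.erase j).erase i, (x - lam k) =
      ∑ j, (∑ i ∈ univ.erase j, (α i + α j) / (lam j - lam i)) *
        ∏ k ∈ univ.erase j, (x - lam k) := by
  set P : ι → K := fun j => ∏ k ∈ univ.erase j, (x - lam k)
  have hpartial : ∀ j, ∀ i ∈ univ.erase j, α j * ∏ k ∈ (univ.erase j).erase i, (x - lam k) =
      α j / (lam j - lam i) * P j + α j / (lam i - lam j) * P i := by
    intro j i hi
    have hij := ne_of_mem_erase hi
    have hne : lam j - lam i ≠ 0 := sub_ne_zero.2 (hlam.ne hij.symm)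
    have hQ : ∏ k ∈ (univ.erase j).erase i, (x - lam k) = (P j - P i) / (lam j - lam i) := by
      rw [eq_div_iff hne, mul_comm]
      exact sub_mul_prod_erase_erase lam x hij
    rw [hQ, ← neg_sub (lam j)]
    field_simp
    ring
  calc ∑ j, α j * ∑ i ∈ univ.erase j, ∏ k ∈ (univ.erase j).erase i, (x - lam k)
      = ∑ j, ∑ i ∈ univ.erase j, (α j / (lam j - lam i) * P j + α j / (lam i - lam j) * P i) :=
        sum_congr rfl fun j _ => by rw [mul_sum]; exact sum_congr rfl (hpartial j)
    _ = ∑ j, ∑ i ∈ univ.erase j, (α j / (lam j - lam i) * P j + α i / (lam j - lam i) * P j) := by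
        simp only [sum_add_distrib]
        rw [sum_sum_erase_comm fun j i => α j / (lam i - lam j) * P i]
    _ = ∑ j, (∑ i ∈ univ.erase j, (α i + α j) / (lam j - lam i)) * P j := by
        simp only [sum_mul]
        exact sum_congr rfl fun j _ => sum_congr rfl fun i _ => by ring

end

/-- The derivative of the secular polynomial
`p₀(λ) = ∏ₖ (λ - λₖ) - ∑ⱼ αⱼ ∏_{k ≠ j} (λ - λₖ)` is again of secular form:
`p₀'(λ) = ∑ⱼ μⱼ ∏_{k ≠ j} (λ - λₖ)` with
`μⱼ = 1 - ∑_{i ≠ j} (αᵢ + αⱼ)/(λⱼ - λᵢ)`; equivalently, away from the poles,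
`p₀'(λ) = (∑ⱼ μⱼ/(λ - λⱼ)) ∏ₖ (λ - λₖ)`. -/
theorem secular_polynomial_deriv (N : ℕ) (lam α : Fin N → ℝ)
    (hlam : Function.Injective lam) :
    (∀ x : ℝ,
        HasDerivAt
          (fun t => ∏ k, (t - lam k) - ∑ j, α j * ∏ k ∈ univ.erase j, (t - lam k))
          (∑ j, (1 - ∑ i ∈ univ.erase j, (α i + α j) / (lam j - lam i)) *
            ∏ k ∈ univ.erase j, (x - lam k)) x) ∧
      ∀ x : ℝ, (∀ j, x ≠ lam j) →
        (∑ j, (1 - ∑ i ∈ univ.erase j, (α i + α j) / (lam j - lam i)) *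
            ∏ k ∈ univ.erase j, (x - lam k)) =
          (∑ j, (1 - ∑ i ∈ univ.erase j, (α i + α j) / (lam j - lam i)) / (x - lam j)) *
            ∏ k, (x - lam k) := by
  refine ⟨fun x => ?_, fun x hx => ?_⟩
  · have hderiv := (hasDerivAt_prod_sub univ lam x).fun_sub
      (HasDerivAt.fun_sum (u := univ) fun j _ =>
        (hasDerivAt_prod_sub (univ.erase j) lam x).const_mul (α j))
    refine hderiv.congr_deriv ?_
    rw [sum_mul_sum_prod_erase_erase hlam]
    simp only [sub_mul, one_mul, sum_sub_distrib]
  · rw [sum_mul]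
    refine sum_congr rfl fun j _ => ?_
    rw [← mul_prod_erase univ _ (mem_univ j)]
    field_simp [sub_ne_zero.2 (hx j)]
end

section
/- Let $d_1, \dots, d_N$ be distinct real numbers and $\alpha_1, \dots, \alpha_N$ real numbers, and let $f(\lambda) = 1 - \sum_{j=1}^{N} \frac{\alpha_j}{\lambda - d_j}$. Suppose $\xi \in \mathbb{R}$ with $\xi \notin \{d_1, \dots, d_N\}$ satisfies $f(\xi) = 0$. Then for every real $\lambda \notin \{d_1, \dots, d_N, \xi\}$: $f(\lambda)\cdot\frac{\lambda - d_1}{\lambda - \xi} = 1 - \sum_{j=1}^{N} \frac{d_j - d_1}{d_j - \xi}\cdot\frac{\alpha_j}{\lambda - d_j}$. (Note the $j = 1$ term on the right vanishes, so the deflated function has one fewer pole.) -/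
/-- Deflation of a known root `ξ` of the secular function
`f(λ) = 1 - ∑ⱼ αⱼ/(λ - dⱼ)`: for every `λ` avoiding the poles and `ξ`,
`f(λ) (λ - d₁)/(λ - ξ) = 1 - ∑ⱼ ((dⱼ - d₁)/(dⱼ - ξ)) αⱼ/(λ - dⱼ)`
(the `j = 1` term on the right vanishes, so the deflated function has one fewer
pole). -/
theorem secular_root_deflation (N : ℕ) (hN : 0 < N) (d : Fin N → ℝ)
    (hd : Function.Injective d) (α : Fin N → ℝ) (ξ : ℝ) (hξ : ∀ j, ξ ≠ d j)
    (hroot : 1 - ∑ j, α j / (ξ - d j) = 0)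
    (x : ℝ) (hx : ∀ j, x ≠ d j) (hxξ : x ≠ ξ) :
    (1 - ∑ j, α j / (x - d j)) * ((x - d ⟨0, hN⟩) / (x - ξ)) =
      1 - ∑ j, ((d j - d ⟨0, hN⟩) / (d j - ξ)) * (α j / (x - d j)) := by
  set d₀ := d ⟨0, hN⟩ with hd₀
  have hxs : x - ξ ≠ 0 := sub_ne_zero.2 hxξ
  have key : ∀ j : Fin N,
      α j / (x - d j) * (x - d₀) - ((d j - d₀) / (d j - ξ)) * (α j / (x - d j)) * (x - ξ)
        = (ξ - d₀) * (α j / (ξ - d j)) := by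
    intro j
    have h1 : x - d j ≠ 0 := sub_ne_zero.2 (hx j)
    have h2 : d j - ξ ≠ 0 := sub_ne_zero.2 (Ne.symm (hξ j))
    have h3 : ξ - d j ≠ 0 := sub_ne_zero.2 (hξ j)
    field_simp
    ring
  have hs : (∑ j, α j / (x - d j)) * (x - d₀)
      - (∑ j, ((d j - d₀) / (d j - ξ)) * (α j / (x - d j))) * (x - ξ)
      = (ξ - d₀) * ∑ j, α j / (ξ - d j) := by
    rw [Finset.sum_mul, Finset.sum_mul, Finset.mul_sum, ← Finset.sum_sub_distrib]
    exact Finset.sum_congr rfl fun j _ => key j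
  have hkey : (1 - ∑ j, α j / (x - d j)) * (x - d₀)
      = (1 - ∑ j, ((d j - d₀) / (d j - ξ)) * (α j / (x - d j))) * (x - ξ) := by
    linear_combination (-1) * hs + (ξ - d₀) * hroot
  rw [mul_div_assoc' , hkey, mul_div_cancel_right₀ _ hxs]
end

section
/- Let $\Lambda = \mathrm{diag}(\lambda_1, \dots, \lambda_n)$ be a real diagonal matrix, $L$ a real $n \times k$ matrix, and $\mu \in \mathbb{R}$ with $\mu \ne \lambda_j$ for all $j$. Suppose $\alpha \in \mathbb{R}^k$, $\alpha \ne 0$, satisfies $\big(I_k + L^T (\Lambda - \mu I_n)^{-1} L\big)\alpha = 0$. Then $u = (\Lambda - \mu I_n)^{-1} L \alpha$ is nonzero and satisfies $(\Lambda + L L^T) u = \mu u$; i.e., $\mu$ is an eigenvalue of $\Lambda + L L^T$ with eigenvector $u$. -/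
open Matrix

/-- Converse eigenvector-update relation: if `α ≠ 0` lies in the null space of
`I_k + Lᵀ (Λ - μ I)⁻¹ L` (with `μ` not a diagonal entry of `Λ`), then
`u = (Λ - μ I)⁻¹ L α` is a nonzero eigenvector of `Λ + L Lᵀ` for the
eigenvalue `μ`. -/
theorem eigenvector_update_converse (n k : ℕ) (lam : Fin n → ℝ)
    (L : Matrix (Fin n) (Fin k) ℝ) (μ : ℝ) (hμ : ∀ j, μ ≠ lam j)
    (α : Fin k → ℝ) (hα : α ≠ 0)
    (hnull : ((1 : Matrix (Fin k) (Fin k) ℝ) +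
        Lᵀ * (Matrix.diagonal lam - μ • (1 : Matrix (Fin n) (Fin n) ℝ))⁻¹ * L) *ᵥ α = 0) :
    (Matrix.diagonal lam - μ • (1 : Matrix (Fin n) (Fin n) ℝ))⁻¹ *ᵥ (L *ᵥ α) ≠ 0 ∧
      (Matrix.diagonal lam + L * Lᵀ) *ᵥ
          ((Matrix.diagonal lam - μ • (1 : Matrix (Fin n) (Fin n) ℝ))⁻¹ *ᵥ (L *ᵥ α)) =
        μ • ((Matrix.diagonal lam - μ • (1 : Matrix (Fin n) (Fin n) ℝ))⁻¹ *ᵥ (L *ᵥ α)) := by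
  set M : Matrix (Fin n) (Fin n) ℝ :=
    Matrix.diagonal lam - μ • (1 : Matrix (Fin n) (Fin n) ℝ) with hM
  have hMdiag : M = Matrix.diagonal (fun i => lam i - μ) := by
    rw [hM]
    ext i j
    by_cases h : i = j <;>
      simp [Matrix.diagonal, Matrix.one_apply, h]
  have hunit : IsUnit M.det := by
    rw [hMdiag, Matrix.det_diagonal]
    exact isUnit_iff_ne_zero.2 (Finset.prod_ne_zero_iff.2 fun i _ =>
      sub_ne_zero.2 fun h => hμ i h.symm)
  set u : Fin n → ℝ := M⁻¹ *ᵥ (L *ᵥ α) with hu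
  have hMu : M *ᵥ u = L *ᵥ α := by
    rw [hu, Matrix.mulVec_mulVec, Matrix.mul_nonsing_inv _ hunit, Matrix.one_mulVec]
  have hLtu : Lᵀ *ᵥ u = -α := by
    have h1 : α + Lᵀ *ᵥ u = 0 := by
      have := hnull
      rw [Matrix.add_mulVec, Matrix.one_mulVec, Matrix.mul_assoc,
        ← Matrix.mulVec_mulVec, ← Matrix.mulVec_mulVec] at this
      rw [hu]
      convert this using 2
    linear_combination (norm := module) h1
  have hune : u ≠ 0 := by
    intro h
    apply hα
    have : L *ᵥ α = 0 := by rw [← hMu, h, Matrix.mulVec_zero]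
    have h2 : Lᵀ *ᵥ u = 0 := by rw [h, Matrix.mulVec_zero]
    rw [hLtu] at h2
    simpa [neg_eq_zero] using h2
  refine ⟨hune, ?_⟩
  have key : Matrix.diagonal lam *ᵥ u = M *ᵥ u + μ • u := by
    rw [hM, Matrix.sub_mulVec, Matrix.smul_mulVec, Matrix.one_mulVec]
    module
  rw [Matrix.add_mulVec, key, hMu, ← Matrix.mulVec_mulVec, hLtu, Matrix.mulVec_neg]
  module
end

section
/- Let $\lambda_1 < \lambda_2 < \cdots < \lambda_n$ be real numbers, $\sigma > 0$, and $\zeta_1, \dots, \zeta_n$ real numbers with $\zeta_j \ne 0$ for all $j$. Define the rank-one secular function $f(\lambda) = 1 + \sigma \sum_{j=1}^{n} \frac{\zeta_j^2}{\lambda_j - \lambda}$ for $\lambda \notin \{\lambda_1, \dots, \lambda_n\}$. Then: (i) $f$ is strictly increasing on each connected component of $\mathbb{R} \setminus \{\lambda_1, \dots, \lambda_n\}$; (ii) $f$ has exactly one zero in each open interval $(\lambda_i, \lambda_{i+1})$ for $1 \le i \le n-1$; (iii) $f$ has exactly one zero in the interval $(\lambda_n, \lambda_n + \sigma \sum_{j=1}^{n}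 \zeta_j^2]$ and no zero in $(\lambda_n + \sigma\sum_j \zeta_j^2, \infty)$; and (iv) $f$ has no zero in $(-\infty, \lambda_1)$. -/
/-!
Each term `ζⱼ² / (λⱼ - x)` is strictly increasing in `x` away from its pole, so `f` is strictly
increasing on every interval free of poles and has at most one zero there. Near a pole `λᵢ` the
term with index `i` dominates: `f → +∞` as `x ↑ λᵢ` and `f → -∞` as `x ↓ λᵢ`, so by the
intermediate value theorem `f` vanishes between consecutive poles. At `b = λₙ + σ ∑ ζₖ²` every
`b - λⱼ` is at least `σ ∑ ζₖ²`, so `σ ∑ ζⱼ² / (λⱼ - b) ≥ -1` and `f b ≥ 0`, while `f → -∞` as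
`x ↓ λₙ`. To the left of `λ₁` all terms are positive, so `f ≥ 1`.
-/

open Filter Topology Finset Set

theorem existsUnique_eq_of_strictMonoOn {α δ : Type*} [ConditionallyCompleteLinearOrder α]
    [TopologicalSpace α] [OrderTopology α] [DenselyOrdered α] [LinearOrder δ] [TopologicalSpace δ]
    [OrderClosedTopology δ] {f : α → δ} {s : Set α} {a b : α} {c : δ} (hs : s.OrdConnected)
    (hcont : ContinuousOn f s) (hmono : StrictMonoOn f s) (ha : a ∈ s) (hb : b ∈ s)
    (hfa : f a ≤ c) (hfb : c ≤ f b) : ∃! x, x ∈ s ∧ f x = c := by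
  have hsub := hs.uIcc_subset ha hb
  obtain ⟨x, hx, hfx⟩ := intermediate_value_uIcc (hcont.mono hsub) (mem_uIcc.2 (.inl ⟨hfa, hfb⟩))
  exact ⟨x, ⟨hsub hx, hfx⟩, fun y hy => hmono.injOn hy.1 (hsub hx) (hy.2.trans hfx.symm)⟩

theorem div_sub_lt_div_sub {c a x y : ℝ} (hc : 0 < c) (hxy : x < y) (ha : a ∉ Icc x y) :
    c / (a - x) < c / (a - y) := by
  rcases lt_or_ge a x with hax | hxa
  · rw [← neg_sub x, ← neg_sub y, div_neg, div_neg, neg_lt_neg_iff]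
    exact div_lt_div_of_pos_left hc (sub_pos.2 hax) (by linarith)
  · have hya : y < a := lt_of_not_ge fun hay => ha ⟨hxa, hay⟩
    exact div_lt_div_of_pos_left hc (sub_pos.2 hya) (by linarith)

theorem tendsto_div_sub_nhdsGT_atBot {c : ℝ} (hc : 0 < c) (a : ℝ) :
    Tendsto (fun x => c / (a - x)) (𝓝[>] a) atBot := by
  have h : Tendsto (fun x => a - x) (𝓝[>] a) (𝓝[<] 0) := by
    rw [← sub_self a]
    exact map_subLeft_nhdsGT.le
  simpa only [div_eq_mul_inv, Function.comp_apply] using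
    (tendsto_inv_nhdsLT_zero.comp h).const_mul_atBot hc

theorem tendsto_div_sub_nhdsLT_atTop {c : ℝ} (hc : 0 < c) (a : ℝ) :
    Tendsto (fun x => c / (a - x)) (𝓝[<] a) atTop := by
  have h : Tendsto (fun x => a - x) (𝓝[<] a) (𝓝[>] 0) := by
    rw [← sub_self a]
    exact map_subLeft_nhdsLT.le
  simpa only [div_eq_mul_inv, Function.comp_apply] using
    (tendsto_inv_nhdsGT_zero.comp h).const_mul_atTop hc

noncomputable def secular {ι : Type*} [Fintype ι] (σ : ℝ) (ζ lam : ι → ℝ) (x : ℝ) : ℝ :=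
  1 + σ * ∑ j, ζ j ^ 2 / (lam j - x)

section Secular

variable {ι : Type*} [Fintype ι] {σ : ℝ} {ζ lam : ι → ℝ}

theorem secular_lt_secular [Nonempty ι] (hσ : 0 < σ) (hζ : ∀ j, ζ j ≠ 0) {x y : ℝ} (hxy : x < y)
    (hlam : ∀ j, lam j ∉ Icc x y) : secular σ ζ lam x < secular σ ζ lam y := by
  have hsum : ∑ j, ζ j ^ 2 / (lam j - x) < ∑ j, ζ j ^ 2 / (lam j - y) :=
    sum_lt_sum_of_nonempty univ_nonempty fun j _ =>
      div_sub_lt_div_sub (sq_pos_of_ne_zero (hζ j)) hxy (hlam j)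
  unfold secular
  gcongr

theorem strictMonoOn_secular [Nonempty ι] (hσ : 0 < σ) (hζ : ∀ j, ζ j ≠ 0) {s : Set ℝ}
    (hs : s.OrdConnected) (hlam : ∀ j, lam j ∉ s) : StrictMonoOn (secular σ ζ lam) s :=
  fun _ hx _ hy hxy => secular_lt_secular hσ hζ hxy fun j hj => hlam j (hs.out hx hy hj)

theorem continuousOn_secular {s : Set ℝ} (hlam : ∀ j, lam j ∉ s) :
    ContinuousOn (secular σ ζ lam) s :=
  continuousOn_const.add <| continuousOn_const.mul <| continuousOn_finsetSum _ fun j _ =>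
    continuousOn_const.div (continuousOn_const.sub continuousOn_id) fun _ hx =>
      sub_ne_zero.2 (ne_of_mem_of_not_mem hx (hlam j)).symm

theorem continuousAt_sum_erase_div_sub [DecidableEq ι] (hlam : Function.Injective lam) (i : ι) :
    ContinuousAt (fun x => ∑ j ∈ univ.erase i, ζ j ^ 2 / (lam j - x)) (lam i) :=
  tendsto_finsetSum _ fun _ hj => continuousAt_const.div (continuousAt_const.sub continuousAt_id)
    (sub_ne_zero.2 (hlam.ne (ne_of_mem_erase hj)))

theorem tendsto_secular_nhdsGT_atBot (hσ : 0 < σ) (hlam : Function.Injective lam) {i : ι}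
    (hζ : ζ i ≠ 0) : Tendsto (secular σ ζ lam) (𝓝[>] (lam i)) atBot := by
  classical
  have hpole := tendsto_div_sub_nhdsGT_atBot (sq_pos_of_ne_zero hζ) (lam i)
  have hsum := hpole.atBot_add ((continuousAt_sum_erase_div_sub (ζ := ζ) hlam i).tendsto.mono_left
    nhdsWithin_le_nhds)
  replace hsum := hsum.congr fun x => add_sum_erase _ (fun j => ζ j ^ 2 / (lam j - x)) (mem_univ i)
  exact tendsto_atBot_add_const_left _ 1 (hsum.const_mul_atBot hσ)

theorem tendsto_secular_nhdsLT_atTop (hσ : 0 < σ) (hlam : Function.Injective lam) {i : ι}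
    (hζ : ζ i ≠ 0) : Tendsto (secular σ ζ lam) (𝓝[<] (lam i)) atTop := by
  classical
  have hpole := tendsto_div_sub_nhdsLT_atTop (sq_pos_of_ne_zero hζ) (lam i)
  have hsum := hpole.atTop_add ((continuousAt_sum_erase_div_sub (ζ := ζ) hlam i).tendsto.mono_left
    nhdsWithin_le_nhds)
  replace hsum := hsum.congr fun x => add_sum_erase _ (fun j => ζ j ^ 2 / (lam j - x)) (mem_univ i)
  exact tendsto_atTop_add_const_left _ 1 (hsum.const_mul_atTop hσ)

theorem secular_nonneg_of_forall_add_le (hσ : 0 < σ) (hS : 0 < ∑ j, ζ j ^ 2) {x : ℝ}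
    (hx : ∀ j, lam j + σ * ∑ k, ζ k ^ 2 ≤ x) : 0 ≤ secular σ ζ lam x := by
  have hσS : 0 < σ * ∑ k, ζ k ^ 2 := mul_pos hσ hS
  have hterm : ∀ j, -(ζ j ^ 2 / (σ * ∑ k, ζ k ^ 2)) ≤ ζ j ^ 2 / (lam j - x) := fun j => by
    rw [← neg_sub x, div_neg, neg_le_neg_iff]
    exact div_le_div_of_nonneg_left (sq_nonneg _) hσS (by linarith [hx j])
  calc 0 = 1 + σ * ∑ j, -(ζ j ^ 2 / (σ * ∑ k, ζ k ^ 2)) := by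
        rw [sum_neg_distrib, ← sum_div]
        field_simp
        ring
    _ ≤ secular σ ζ lam x := by
        unfold secular
        gcongr with j
        exact hterm j

theorem one_le_secular (hσ : 0 ≤ σ) {x : ℝ} (hx : ∀ j, x < lam j) : 1 ≤ secular σ ζ lam x :=
  le_add_of_nonneg_right <| mul_nonneg hσ <| sum_nonneg fun j _ =>
    div_nonneg (sq_nonneg _) (sub_pos.2 (hx j)).le

theorem exists_mem_Ioo_secular_nonpos (hσ : 0 < σ) (hlam : Function.Injective lam) {i : ι}
    (hζ : ζ i ≠ 0) {b : ℝ} (hb : lam i < b) : ∃ a ∈ Ioo (lam i) b, secular σ ζ lam a ≤ 0 := by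
  obtain ⟨a, hfa, ha⟩ := ((tendsto_secular_nhdsGT_atBot hσ hlam hζ).eventually_le_atBot 0 |>.and
    (Ioo_mem_nhdsGT hb)).exists
  exact ⟨a, ha, hfa⟩

theorem existsUnique_secular_eq_zero_Ioo [Nonempty ι] (hσ : 0 < σ) (hζ : ∀ j, ζ j ≠ 0)
    (hlam : Function.Injective lam) {i j : ι} (hij : lam i < lam j)
    (hgap : ∀ k, lam k ∉ Ioo (lam i) (lam j)) :
    ∃! x, x ∈ Ioo (lam i) (lam j) ∧ secular σ ζ lam x = 0 := by
  obtain ⟨a, ha, hfa⟩ := exists_mem_Ioo_secular_nonpos hσ hlam (hζ i) hij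
  obtain ⟨c, hfc, hc⟩ := ((tendsto_secular_nhdsLT_atTop hσ hlam (hζ j)).eventually_ge_atTop 0 |>.and
    (Ioo_mem_nhdsLT hij)).exists
  exact existsUnique_eq_of_strictMonoOn ordConnected_Ioo (continuousOn_secular hgap)
    (strictMonoOn_secular hσ hζ ordConnected_Ioo hgap) ha hc hfa hfc

theorem existsUnique_secular_eq_zero_Ioc [Nonempty ι] {i : ι} (hσ : 0 < σ) (hζ : ∀ j, ζ j ≠ 0)
    (hlam : Function.Injective lam) (hi : ∀ k, lam k ≤ lam i) :
    ∃! x, x ∈ Ioc (lam i) (lam i + σ * ∑ j, ζ j ^ 2) ∧ secular σ ζ lam x = 0 := by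
  have hS : 0 < ∑ j, ζ j ^ 2 := sum_pos (fun j _ => sq_pos_of_ne_zero (hζ j)) univ_nonempty
  have hb : lam i < lam i + σ * ∑ j, ζ j ^ 2 := lt_add_of_pos_right _ (mul_pos hσ hS)
  have hgap : ∀ k, lam k ∉ Ioc (lam i) (lam i + σ * ∑ j, ζ j ^ 2) := fun k hk =>
    (hi k).not_gt hk.1
  obtain ⟨a, ha, hfa⟩ := exists_mem_Ioo_secular_nonpos hσ hlam (hζ i) hb
  exact existsUnique_eq_of_strictMonoOn ordConnected_Ioc (continuousOn_secular hgap)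
    (strictMonoOn_secular hσ hζ ordConnected_Ioc hgap) (Ioo_subset_Ioc_self ha) ⟨hb, le_rfl⟩ hfa
    (secular_nonneg_of_forall_add_le hσ hS fun k => by linarith [hi k])

theorem secular_pos_of_add_lt [Nonempty ι] {i : ι} (hσ : 0 < σ) (hζ : ∀ j, ζ j ≠ 0)
    (hi : ∀ k, lam k ≤ lam i) {x : ℝ} (hx : lam i + σ * ∑ j, ζ j ^ 2 < x) :
    0 < secular σ ζ lam x := by
  have hS : 0 < ∑ j, ζ j ^ 2 := sum_pos (fun j _ => sq_pos_of_ne_zero (hζ j)) univ_nonempty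
  set b := lam i + σ * ∑ j, ζ j ^ 2
  have hb : lam i < b := lt_add_of_pos_right _ (mul_pos hσ hS)
  calc 0 ≤ secular σ ζ lam b := secular_nonneg_of_forall_add_le hσ hS fun k => by linarith [hi k]
    _ < secular σ ζ lam x :=
      secular_lt_secular hσ hζ hx fun k hk => (hi k).not_gt (hb.trans_le hk.1)

end Secular

/-- Properties of the rank-one secular function
`f(λ) = 1 + σ ∑ⱼ ζⱼ²/(λⱼ - λ)` with `σ > 0`, all `ζⱼ ≠ 0` and
`λ₁ < ⋯ < λₙ`: (i) `f` is strictly increasing on each connected component of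
`ℝ \ {λ₁, …, λₙ}`; (ii) `f` has exactly one zero in each interval
`(λᵢ, λᵢ₊₁)`; (iii) `f` has exactly one zero in `(λₙ, λₙ + σ ∑ ζⱼ²]` and no
zero beyond; (iv) `f` has no zero in `(-∞, λ₁)`. -/
theorem rank_one_secular_properties (n : ℕ) (hn : 0 < n) (lam : Fin n → ℝ)
    (hlam : StrictMono lam) (σ : ℝ) (hσ : 0 < σ) (ζ : Fin n → ℝ)
    (hζ : ∀ j, ζ j ≠ 0) (f : ℝ → ℝ)
    (hf : ∀ x, f x = 1 + σ * ∑ j, ζ j ^ 2 / (lam j - x)) :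
    (∀ x y : ℝ, x < y → (∀ j, lam j ∉ Set.Icc x y) → f x < f y) ∧
      (∀ i j : Fin n, (j : ℕ) = (i : ℕ) + 1 →
        ∃! x, x ∈ Set.Ioo (lam i) (lam j) ∧ f x = 0) ∧
      (∃! x, x ∈ Set.Ioc (lam ⟨n - 1, Nat.sub_lt hn one_pos⟩)
          (lam ⟨n - 1, Nat.sub_lt hn one_pos⟩ + σ * ∑ j, ζ j ^ 2) ∧ f x = 0) ∧
      (∀ x, lam ⟨n - 1, Nat.sub_lt hn one_pos⟩ + σ * ∑ j, ζ j ^ 2 < x → f x ≠ 0) ∧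
      (∀ x, x < lam ⟨0, hn⟩ → f x ≠ 0) := by
  obtain rfl : f = secular σ ζ lam := funext hf
  have : Nonempty (Fin n) := ⟨⟨0, hn⟩⟩
  have hle_last : ∀ k, lam k ≤ lam ⟨n - 1, Nat.sub_lt hn one_pos⟩ := fun k =>
    hlam.monotone (Fin.le_def.2 (Nat.le_sub_one_of_lt k.isLt))
  refine ⟨fun x y => secular_lt_secular hσ hζ, fun i j hij => ?_,
    existsUnique_secular_eq_zero_Ioc hσ hζ hlam.injective hle_last,
    fun x hx => (secular_pos_of_add_lt hσ hζ hle_last hx).ne', fun x hx => ?_⟩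
  · refine existsUnique_secular_eq_zero_Ioo hσ hζ hlam.injective (hlam (Fin.lt_def.2 (by omega)))
      fun k ⟨hik, hkj⟩ => ?_
    have := Fin.lt_def.1 (hlam.lt_iff_lt.1 hik)
    have := Fin.lt_def.1 (hlam.lt_iff_lt.1 hkj)
    omega
  · have hx' : ∀ j, x < lam j := fun j => hx.trans_le (hlam.monotone (Fin.le_def.2 (Nat.zero_le _)))
    exact (zero_lt_one.trans_le (one_le_secular hσ.le hx')).ne'
end

section
/- Let $N \ge 1$ and let $p_0, p_1, \dots, p_N$ be real polynomials such that $\deg p_m = N - m$ for all $0 \le m \le N$, the leading coefficient $c_m$ of each $p_m$ is strictly positive, and for each $2 \le m \le N$ there exists a polynomial $q_m$ of degree $1$ with $p_{m-2}(x) = q_m(x)\, p_{m-1}(x) - p_m(x)$ for all $x$. Then $p_0$ has $N$ distinct real roots. -/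
/-!
Reindex the chain upwards, `f k = p (N - k)`, so that `deg f k = k`. By induction on `k`, `f k`
has `k` simple real roots `r₀ > ⋯ > r_{k-1}` along which `f (k-1)` alternates in sign, starting
positive. Since `f (k+1) = q f k - f (k-1)`, at these roots `f (k+1)` alternates with the opposite
signs; together with a point far to the right (where `f (k+1) > 0`) and one far to the left
(where its sign is `(-1)^(k+1)`), the intermediate value theorem gives one root of `f (k+1)` in
each of the `k+1` gaps, and the factorisation `f k = c ∏ (X - rᵢ)` shows that `f k` alternates
along these new roots.
-/

open Polynomial Filter Finset Asymptotics

namespace Polynomial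

variable {𝕜 : Type*} [NormedField 𝕜] [LinearOrder 𝕜] [IsStrictOrderedRing 𝕜] [OrderTopology 𝕜]
  {P : 𝕜[X]}

theorem eventually_atTop_eval_pos (hP : 0 < P.leadingCoeff) : ∀ᶠ x in atTop, 0 < P.eval x :=
  P.isEquivalent_atTop_lead.eventually_pos <|
    (eventually_gt_atTop 0).mono fun _ hx => mul_pos hP (pow_pos hx _)

theorem eventually_atBot_neg_one_pow_mul_eval_pos (hP : 0 < P.leadingCoeff) :
    ∀ᶠ x in atBot, 0 < (-1) ^ P.natDegree * P.eval x := by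
  refine ((IsEquivalent.refl (u := fun _ => (-1) ^ P.natDegree)).mul
    P.isEquivalent_atBot_lead).eventually_pos <| (eventually_lt_atBot 0).mono fun x hx => ?_
  simpa [mul_left_comm _ P.leadingCoeff, ← mul_pow] using
    mul_pos hP (pow_pos (neg_pos.2 hx) P.natDegree)

end Polynomial

theorem neg_one_pow_card_filter_neg_mul_prod_pos {ι R : Type*} [CommRing R] [LinearOrder R]
    [IsStrictOrderedRing R] (s : Finset ι) {g : ι → R} (hg : ∀ i ∈ s, g i ≠ 0) :
    0 < (-1) ^ #{i ∈ s | g i < 0} * ∏ i ∈ s, g i := by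
  rw [← prod_filter_mul_prod_filter_not s (fun i => g i < 0), ← mul_assoc, ← prod_neg]
  refine mul_pos (prod_pos fun i hi => neg_pos.2 (mem_filter.1 hi).2) (prod_pos fun i hi => ?_)
  obtain ⟨hi, hnonneg⟩ := mem_filter.1 hi
  exact (not_lt.1 hnonneg).lt_of_ne' (hg i hi)

theorem exists_zeros_between_of_alternating {f : ℝ → ℝ} (hf : Continuous f) {n : ℕ}
    {y : ℕ → ℝ} (hy : StrictAntiOn y (Set.Iic n)) (hsign : ∀ i ≤ n, 0 < (-1) ^ i * f (y i)) :
    ∃ s : ℕ → ℝ, StrictAntiOn s (Set.Iio n) ∧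
      ∀ j < n, y (j + 1) < s j ∧ s j < y j ∧ f (s j) = 0 := by
  have hzero : ∀ j < n, ∃ x ∈ Set.Ioo (y (j + 1)) (y j), f x = 0 := by
    intro j hj
    have hlt : y (j + 1) < y j :=
      hy (Set.mem_Iic.2 hj.le) (Set.mem_Iic.2 hj) (Nat.lt_succ_self j)
    have hneg : (-1) ^ j * f (y (j + 1)) < 0 := by
      have := hsign (j + 1) hj
      rw [pow_succ] at this
      linarith
    obtain ⟨x, hx, hx0⟩ := intermediate_value_Ioo hlt.le
      (continuous_const.mul hf).continuousOn ⟨hneg, hsign j hj.le⟩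
    exact ⟨x, hx, (mul_eq_zero.1 hx0).resolve_left (pow_ne_zero _ (by norm_num))⟩
  choose! s hs hs0 using hzero
  refine ⟨s, fun i hi j hj hij => ?_, fun j hj => ⟨(hs j hj).1, (hs j hj).2, hs0 j hj⟩⟩
  calc s j < y j := (hs j hj).2
    _ ≤ y (i + 1) := hy.antitoneOn (Set.mem_Iic.2 hi) (Set.mem_Iic.2 hj.le) hij
    _ < s i := (hs i hi).1

theorem eq_C_leadingCoeff_mul_nodal {ι R : Type*} [CommRing R] [IsDomain R] {f : R[X]}
    {s : Finset ι} {v : ι → R} (hvs : Set.InjOn v s) (hdeg : f.natDegree = #s)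
    (hroot : ∀ i ∈ s, f.IsRoot (v i)) : f = C f.leadingCoeff * Lagrange.nodal s v := by
  rcases eq_or_ne f 0 with rfl | hf
  · simp
  refine eq_of_degree_sub_lt_of_eval_index_eq _ hvs ?_ fun i hi => ?_
  · have hdeg' : f.degree = (C f.leadingCoeff * Lagrange.nodal s v).degree := by
      rw [degree_C_mul (leadingCoeff_ne_zero.2 hf), Lagrange.degree_nodal,
        degree_eq_natDegree hf, hdeg]
    calc (f - C f.leadingCoeff * Lagrange.nodal s v).degree < f.degree :=
          degree_sub_lt_left hdeg' hf (by simp [Lagrange.nodal_monic])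
      _ = #s := by rw [degree_eq_natDegree hf, hdeg]
  · rw [(hroot i hi).eq_zero, eval_mul, Lagrange.eval_nodal_at_node hi, mul_zero]

theorem card_roots_toFinset_eq_of_injOn {ι R : Type*} [CommRing R] [IsDomain R]
    [DecidableEq R] {f : R[X]} (hf : f ≠ 0) {s : Finset ι} {v : ι → R}
    (hvs : Set.InjOn v s) (hdeg : f.natDegree = #s) (hroot : ∀ i ∈ s, f.IsRoot (v i)) :
    f.roots.toFinset.card = #s :=
  le_antisymm (hdeg ▸ (Multiset.toFinset_card_le _).trans (card_roots' f))
    (card_le_card_of_injOn v (fun i hi => by simpa [hf] using hroot i hi) hvs)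

theorem neg_one_pow_mul_eval_pos_of_roots {f : ℝ[X]} {k j : ℕ} (hf : f.natDegree = k)
    (hl : 0 < f.leadingCoeff) {r : ℕ → ℝ} (hr : Set.InjOn r (Set.Iio k))
    (hroot : ∀ i < k, f.IsRoot (r i)) (hjk : j ≤ k) {x : ℝ} (hbelow : ∀ i < j, x < r i)
    (habove : ∀ i, j ≤ i → i < k → r i < x) : 0 < (-1) ^ j * f.eval x := by
  have hfilter : {i ∈ range k | x - r i < 0} = range j := by
    ext i
    simp only [mem_filter, mem_range, sub_neg]
    exact ⟨fun ⟨hik, hxi⟩ => not_le.1 fun hji => (habove i hji hik).not_gt hxi,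
      fun hij => ⟨hij.trans_le hjk, hbelow i hij⟩⟩
  have hfactor := eq_C_leadingCoeff_mul_nodal (s := range k) (by simpa using hr)
    (by simpa using hf) (fun i hi => hroot i (mem_range.1 hi))
  have hprod := neg_one_pow_card_filter_neg_mul_prod_pos (range k) (g := fun i => x - r i)
    fun i hi => sub_ne_zero.2 fun hxi => by
      rcases lt_or_ge i j with hij | hji
      · exact (hbelow i hij).ne hxi
      · exact (habove i hji (mem_range.1 hi)).ne' hxi
  rw [hfactor, eval_mul, eval_C, Lagrange.eval_nodal, mul_left_comm]
  rw [hfilter, card_range] at hprod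
  exact mul_pos hl hprod

theorem exists_sign_alternating_extension {h : ℝ[X]} {k : ℕ} (hh : h.natDegree = k + 1)
    (hl : 0 < h.leadingCoeff) {r : ℕ → ℝ} (hr : StrictAntiOn r (Set.Iio k))
    (hsign : ∀ i < k, 0 < (-1) ^ (i + 1) * h.eval (r i)) :
    ∃ y : ℕ → ℝ, StrictAntiOn y (Set.Iic (k + 1)) ∧
      (∀ i ≤ k + 1, 0 < (-1) ^ i * h.eval (y i)) ∧ ∀ i < k, y (i + 1) = r i := by
  obtain ⟨a, ha, har⟩ := ((eventually_atBot_neg_one_pow_mul_eval_pos hl).and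
    (eventually_lt_atBot (r (k - 1)))).exists
  obtain ⟨b, hb, hbr⟩ := ((eventually_atTop_eval_pos hl).and
    (eventually_gt_atTop (max a (r 0)))).exists
  rw [hh] at ha
  rw [max_lt_iff] at hbr
  refine ⟨fun i => if i = 0 then b else if i ≤ k then r (i - 1) else a,
    strictAntiOn_Iic_of_succ_lt fun m hm => ?_, fun i hi => ?_, fun i hi => ?_⟩
  · rw [Order.succ_eq_add_one]
    rcases m with _ | m
    · split_ifs <;> simp_all
    · have hmk : m < k := by omega
      simp only [Nat.add_one_ne_zero, if_false, Nat.add_sub_cancel,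
        if_pos (show m + 1 ≤ k from hmk)]
      split_ifs with hm
      · exact hr (Set.mem_Iio.2 hmk) (Set.mem_Iio.2 hm) (Nat.lt_succ_self m)
      · obtain rfl : m = k - 1 := by omega
        exact har
  · rcases i with _ | i
    · simpa using hb
    simp only [Nat.add_one_ne_zero, if_false, Nat.add_sub_cancel]
    split_ifs with hik
    · exact hsign i hik
    · obtain rfl : i = k := by omega
      exact ha
  · simp [hi]

theorem exists_interlacing_roots {k : ℕ} {f h : ℝ[X]} (hf : f.natDegree = k)
    (hfl : 0 < f.leadingCoeff) (hh : h.natDegree = k + 1) (hhl : 0 < h.leadingCoeff)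
    {r : ℕ → ℝ} (hr : StrictAntiOn r (Set.Iio k)) (hroot : ∀ i < k, f.IsRoot (r i))
    (hsign : ∀ i < k, 0 < (-1) ^ (i + 1) * h.eval (r i)) :
    ∃ s : ℕ → ℝ, StrictAntiOn s (Set.Iio (k + 1)) ∧ (∀ j < k + 1, h.IsRoot (s j)) ∧
      ∀ j < k + 1, 0 < (-1) ^ j * f.eval (s j) := by
  obtain ⟨y, hy, hysign, hyr⟩ := exists_sign_alternating_extension hh hhl hr hsign
  obtain ⟨s, hs, hsy⟩ := exists_zeros_between_of_alternating h.continuous hy hysign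
  refine ⟨s, hs, fun j hj => (hsy j hj).2.2, fun j hj => ?_⟩
  refine neg_one_pow_mul_eval_pos_of_roots hf hfl hr.injOn hroot (by omega)
    (fun i hij => ?_) (fun i hji hik => ?_)
  · calc s j < y j := (hsy j hj).2.1
      _ ≤ y (i + 1) := hy.antitoneOn (Set.mem_Iic.2 (by omega)) (Set.mem_Iic.2 (by omega)) hij
      _ = r i := hyr i (by omega)
  · calc r i = y (i + 1) := (hyr i hik).symm
      _ ≤ y (j + 1) := hy.antitoneOn (Set.mem_Iic.2 (by omega)) (Set.mem_Iic.2 (by omega))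
          (by omega)
      _ < s j := (hsy j hj).1

theorem exists_strictAntiOn_roots_of_sturm_chain (f : ℕ → ℝ[X]) (n : ℕ)
    (hdeg : ∀ k ≤ n, (f k).natDegree = k) (hlead : ∀ k ≤ n, 0 < (f k).leadingCoeff)
    (hrec : ∀ k, k + 2 ≤ n → ∀ x, (f (k + 1)).IsRoot x → (f (k + 2)).eval x = -(f k).eval x) :
    ∃ r : ℕ → ℝ, StrictAntiOn r (Set.Iio n) ∧ ∀ i < n, (f n).IsRoot (r i) := by
  rcases n with _ | n
  · exact ⟨0, by simp [StrictAntiOn], by simp⟩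
  suffices ∀ k ≤ n, ∃ r : ℕ → ℝ, StrictAntiOn r (Set.Iio (k + 1)) ∧
      (∀ i < k + 1, (f (k + 1)).IsRoot (r i)) ∧ ∀ i < k + 1, 0 < (-1) ^ i * (f k).eval (r i) by
    obtain ⟨r, hr, hroot, -⟩ := this n le_rfl
    exact ⟨r, hr, hroot⟩
  intro k hk
  induction k with
  | zero =>
    exact exists_interlacing_roots (hdeg 0 (by omega)) (hlead 0 (by omega)) (hdeg 1 (by omega))
      (hlead 1 (by omega)) (r := 0) (by simp [StrictAntiOn]) (by simp) (by simp)
  | succ k ih =>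
    obtain ⟨r, hr, hroot, hsign⟩ := ih (by omega)
    refine exists_interlacing_roots (hdeg (k + 1) (by omega)) (hlead (k + 1) (by omega))
      (hdeg (k + 2) (by omega)) (hlead (k + 2) (by omega)) hr hroot fun i hi => ?_
    rw [hrec k (by omega) _ (hroot i hi), pow_succ]
    linarith [hsign i hi]

theorem sturm_chain_all_roots_real_general (N : ℕ) (p : ℕ → Polynomial ℝ)
    (hdeg : ∀ m ≤ N, (p m).natDegree = N - m)
    (hlead : ∀ m ≤ N, 0 < (p m).leadingCoeff)
    (hchain : ∀ m, 2 ≤ m → m ≤ N →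
      ∃ q : Polynomial ℝ, q.degree = 1 ∧ p (m - 2) = q * p (m - 1) - p m) :
    (p 0).roots.toFinset.card = N := by
  obtain ⟨r, hr, hroot⟩ := exists_strictAntiOn_roots_of_sturm_chain (fun k => p (N - k)) N
    (fun k hk => by rw [hdeg _ (Nat.sub_le N k)]; omega) (fun k _ => hlead _ (Nat.sub_le N k))
    fun k hk x hx => by
      obtain ⟨q, -, hq⟩ := hchain (N - k) (by omega) (Nat.sub_le N k)
      rw [show N - k - 2 = N - (k + 2) by omega, show N - k - 1 = N - (k + 1) by omega] at hq
      simp [hq, hx.eq_zero]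
  simp only [Nat.sub_self] at hroot
  simpa using card_roots_toFinset_eq_of_injOn (s := range N)
    (leadingCoeff_ne_zero.1 (hlead 0 (Nat.zero_le N)).ne') (by simpa using hr.injOn)
    (by simp [hdeg]) fun i hi => hroot i (mem_range.1 hi)

/-- Modified (secular) Sturm chain: if `p₀, p₁, …, p_N` are real polynomials
with `deg pₘ = N - m`, all leading coefficients strictly positive, and each
`p_{m-2} = qₘ p_{m-1} - pₘ` for some degree-one polynomial `qₘ`, then `p₀` has
`N` distinct real roots. -/
theorem sturm_chain_all_roots_real (N : ℕ) (hN : 1 ≤ N) (p : ℕ → Polynomial ℝ)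
    (hdeg : ∀ m ≤ N, (p m).natDegree = N - m)
    (hlead : ∀ m ≤ N, 0 < (p m).leadingCoeff)
    (hchain : ∀ m, 2 ≤ m → m ≤ N →
      ∃ q : Polynomial ℝ, q.degree = 1 ∧ p (m - 2) = q * p (m - 1) - p m) :
    (p 0).roots.toFinset.card = N :=
  sturm_chain_all_roots_real_general N p hdeg hlead hchain
end
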